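/- If x₁,…,xₙ ∈ X are mutually orthogonal (⟨xᵢ,xⱼ⟩ = 0 for i ≠ j), then μ*ₙ(x₁,…,xₙ) = max₁≤i≤n ‖xᵢ‖. -/

import Mathlib

open scoped RightActions

/-- The Hilbert C⋆-module class as it stood in Mathlib (December 2024): a *right* `A`-module
structure (`SMul Aᵐᵒᵖ E`) with `⟪x, y <• a⟫ = ⟪x, y⟫ * a`. Current Mathlib's `CStarModule`
uses a left action `SMul A E` instead, so the old notion is restated here. -/
class CStarModuleRight (A E : Type*) [NonUnitalSemiring A] [StarRing A] [Module ℂ A]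
    [AddCommGroup E] [Module ℂ E] [PartialOrder A] [SMul Aᵐᵒᵖ E] [Norm A] [Norm E]
    extends Inner A E where
  inner_add_right {x} {y} {z} : inner x (y + z) = inner x y + inner x z
  inner_self_nonneg {x} : 0 ≤ inner x x
  inner_self {x} : inner x x = 0 ↔ x = 0
  inner_op_smul_right {a : A} {x y : E} : inner x (y <• a) = inner x y * a
  inner_smul_right_complex {z : ℂ} {x} {y} : inner x (z • y) = z • inner x y
  star_inner x y : star (inner x y) = inner y x
  norm_eq_sqrt_norm_inner_self x : ‖x‖ = √‖inner x x‖

namespace CStarModuleRight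
section
variable {A E : Type*} [NonUnitalCStarAlgebra A] [PartialOrder A] [StarOrderedRing A]
  [NormedAddCommGroup E] [Module ℂ E] [SMul Aᵐᵒᵖ E] [CStarModuleRight A E]

lemma inner_add_left {x y z : E} : inner A (x + y) z = inner A x z + inner A y z := by
  rw [← star_star (r := inner A (x + y) z)]
  simp only [CStarModuleRight.inner_add_right, star_add, CStarModuleRight.star_inner]

lemma inner_op_smul_left {a : A} {x y : E} : inner A (x <• a) y = star a * inner A x y := by
  rw [← CStarModuleRight.star_inner]
  simp only [CStarModuleRight.inner_op_smul_right, star_mul, CStarModuleRight.star_inner]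

lemma inner_smul_left_complex {z : ℂ} {x y : E} : inner A (z • x) y = star z • inner A x y := by
  rw [← CStarModuleRight.star_inner]
  simp only [CStarModuleRight.inner_smul_right_complex, star_smul, CStarModuleRight.star_inner]

lemma inner_smul_left_real {z : ℝ} {x y : E} : inner A (z • x) y = z • inner A x y := by
  have h₁ : z • x = (z : ℂ) • x := by simp
  rw [h₁, inner_smul_left_complex]
  simp

lemma inner_smul_right_real {z : ℝ} {x y : E} : inner A x (z • y) = z • inner A x y := by
  have h₁ : z • y = (z : ℂ) • y := by simp
  rw [h₁, CStarModuleRight.inner_smul_right_complex]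
  simp

/-- `inner A x ·` as an additive map. -/
def innerRightHom (x : E) : E →+ A :=
  AddMonoidHom.mk' (fun y => inner A x y) (fun _ _ => CStarModuleRight.inner_add_right)

/-- `inner A · y` as an additive map. -/
def innerLeftHom (y : E) : E →+ A :=
  AddMonoidHom.mk' (fun x => inner A x y) (fun _ _ => inner_add_left)

lemma inner_zero_right {x : E} : inner A x 0 = 0 := map_zero (innerRightHom (A := A) x)
lemma inner_zero_left {x : E} : inner A 0 x = 0 := map_zero (innerLeftHom (A := A) x)
lemma inner_sub_right {x y z : E} : inner A x (y - z) = inner A x y - inner A x z :=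
  map_sub (innerRightHom (A := A) x) y z
lemma inner_sub_left {x y z : E} : inner A (x - y) z = inner A x z - inner A y z :=
  map_sub (innerLeftHom (A := A) z) x y

lemma inner_sum_right {ι : Type*} {s : Finset ι} {x : E} {y : ι → E} :
    inner A x (∑ i ∈ s, y i) = ∑ i ∈ s, inner A x (y i) :=
  map_sum (innerRightHom (A := A) x) y s

lemma inner_sum_left {ι : Type*} {s : Finset ι} {x : ι → E} {y : E} :
    inner A (∑ i ∈ s, x i) y = ∑ i ∈ s, inner A (x i) y :=
  map_sum (innerLeftHom (A := A) y) x s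

lemma norm_sq_eq {x : E} : ‖x‖ ^ 2 = ‖inner A x x‖ := by
  rw [CStarModuleRight.norm_eq_sqrt_norm_inner_self (A := A) x, Real.sq_sqrt (norm_nonneg _)]

lemma inner_mul_inner_swap_le {x y : E} :
    inner A y x * inner A x y ≤ ‖x‖ ^ 2 • inner A y y := by
  rcases eq_or_ne x 0 with h | h
  · simp [h, inner_zero_left, inner_zero_right]
  · have h₁ : ∀ (a : A),
        (0 : A) ≤ ‖x‖ ^ 2 • (star a * a) - ‖x‖ ^ 2 • (star a * inner A x y)
                  - ‖x‖ ^ 2 • (inner A y x * a) + ‖x‖ ^ 2 • (‖x‖ ^ 2 • inner A y y) := fun a => by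
      calc (0 : A) ≤ inner A (x <• a - ‖x‖ ^ 2 • y) (x <• a - ‖x‖ ^ 2 • y) := by
                      exact CStarModuleRight.inner_self_nonneg
            _ = star a * inner A x x * a - ‖x‖ ^ 2 • (star a * inner A x y)
                  - ‖x‖ ^ 2 • (inner A y x * a) + ‖x‖ ^ 2 • (‖x‖ ^ 2 • inner A y y) := by
                      simp only [inner_sub_right, CStarModuleRight.inner_op_smul_right,
                        inner_sub_left, inner_op_smul_left, inner_smul_left_real, mul_sub,
                        mul_smul_comm, smul_mul_assoc, inner_smul_right_real, smul_sub, mul_assoc, sub_mul]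
                      abel
            _ ≤ ‖x‖ ^ 2 • (star a * a) - ‖x‖ ^ 2 • (star a * inner A x y)
                  - ‖x‖ ^ 2 • (inner A y x * a) + ‖x‖ ^ 2 • (‖x‖ ^ 2 • inner A y y) := by
                      gcongr
                      calc _ ≤ ‖inner A x x‖ • (star a * a) :=
                          CStarAlgebra.star_left_conjugate_le_norm_smul
                            (CStarModuleRight.star_inner _ _)
                        _ = ‖x‖ ^ 2 • (star a * a) := by rw [norm_sq_eq (A := A)]
    specialize h₁ (inner A x y)
    simp only [CStarModuleRight.star_inner, sub_self, zero_sub, le_neg_add_iff_add_le,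
      add_zero] at h₁
    rwa [smul_le_smul_iff_of_pos_left (pow_pos (norm_pos_iff.mpr h) _)] at h₁

end
end CStarModuleRight

variable (A : Type*) {E : Type*} [NonUnitalCStarAlgebra A] [PartialOrder A] [StarOrderedRing A]
  [NormedAddCommGroup E] [Module ℂ E] [SMul Aᵐᵒᵖ E] [CStarModuleRight A E]

open Finset in
lemma mustar_aux_upper (n : ℕ) (x : Fin (n + 1) → E)
    (hx : ∀ i j, i ≠ j → (inner A (x i) (x j) : A) = 0)
    (z : E) (hz : ‖z‖ ≤ 1) :
    Real.sqrt ‖∑ i, star (inner A (x i) z : A) * (inner A (x i) z : A)‖ ≤ ⨆ i, ‖x i‖ := by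
  set M := ⨆ i, ‖x i‖ with hM
  have hbdd : BddAbove (Set.range fun i => ‖x i‖) := (Set.finite_range _).bddAbove
  have hMi : ∀ i, ‖x i‖ ≤ M := fun i => le_ciSup hbdd i
  have hM0 : 0 ≤ M := le_trans (norm_nonneg (x 0)) (hMi 0)
  set a : Fin (n + 1) → A := fun i => (inner A (x i) z : A) with ha
  set S : A := ∑ i, star (a i) * a i with hS
  have hS_nonneg : 0 ≤ S := Finset.sum_nonneg fun i _ => star_mul_self_nonneg _
  have hS_sa : star S = S := by
    simp [hS, star_sum, star_mul]
  set w : E := ∑ i, x i <• a i with hw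
  have hwz : (inner A w z : A) = S := by
    simp [hw, hS, CStarModuleRight.inner_sum_left, CStarModuleRight.inner_op_smul_left, ha]
  have hww : (inner A w w : A) = ∑ i, star (a i) * ((inner A (x i) (x i) : A) * a i) := by
    simp only [hw, CStarModuleRight.inner_sum_left, CStarModuleRight.inner_sum_right, CStarModuleRight.inner_op_smul_left, CStarModuleRight.inner_op_smul_right]
    refine Finset.sum_congr rfl fun i _ => ?_
    rw [Finset.sum_eq_single i]
    · rw [mul_assoc]
    · intro j _ hj
      rw [hx j i hj, mul_zero]
    · simp
  have hww_le : (inner A w w : A) ≤ (M ^ 2) • S := by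
    rw [hww, hS, Finset.smul_sum]
    refine Finset.sum_le_sum fun i _ => ?_
    calc star (a i) * ((inner A (x i) (x i) : A) * a i)
        ≤ ‖(inner A (x i) (x i) : A)‖ • (star (a i) * a i) := by
          rw [← mul_assoc]
          exact CStarAlgebra.star_left_conjugate_le_norm_smul (CStarModuleRight.star_inner _ _)
      _ ≤ (M ^ 2) • (star (a i) * a i) := by
          refine smul_le_smul_of_nonneg_right ?_ (star_mul_self_nonneg _)
          rw [← CStarModuleRight.norm_sq_eq (A := A)]
          exact pow_le_pow_left₀ (norm_nonneg _) (hMi i) 2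
  have hnw : ‖w‖ ^ 2 ≤ M ^ 2 * ‖S‖ := by
    rw [CStarModuleRight.norm_sq_eq (A := A)]
    calc ‖(inner A w w : A)‖ ≤ ‖(M ^ 2) • S‖ :=
          CStarAlgebra.norm_le_norm_of_nonneg_of_le CStarModuleRight.inner_self_nonneg hww_le
      _ = M ^ 2 * ‖S‖ := by
          rw [norm_smul, Real.norm_of_nonneg (sq_nonneg M)]
  have hCS : S * S ≤ ‖w‖ ^ 2 • (inner A z z : A) := by
    have := CStarModuleRight.inner_mul_inner_swap_le (A := A) (x := w) (y := z)
    rwa [hwz, ← CStarModuleRight.star_inner, hwz, hS_sa] at this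
  have h2 : (0 : A) ≤ S * S := by
    nth_rewrite 1 [← hS_sa]
    exact star_mul_self_nonneg _
  have hSS : ‖S‖ * ‖S‖ ≤ M ^ 2 * ‖S‖ := by
    have h1 : ‖S * S‖ = ‖S‖ * ‖S‖ := by
      nth_rewrite 1 [← hS_sa]
      exact CStarRing.norm_star_mul_self
    rw [← h1]
    calc ‖S * S‖ ≤ ‖(‖w‖ ^ 2) • (inner A z z : A)‖ :=
          CStarAlgebra.norm_le_norm_of_nonneg_of_le h2 hCS
      _ = ‖w‖ ^ 2 * ‖(inner A z z : A)‖ := by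
          rw [norm_smul, Real.norm_of_nonneg (sq_nonneg _)]
      _ = ‖w‖ ^ 2 * ‖z‖ ^ 2 := by rw [← CStarModuleRight.norm_sq_eq (A := A)]
      _ ≤ (M ^ 2 * ‖S‖) * 1 := by
          refine mul_le_mul hnw ?_ (sq_nonneg _) ?_
          · nlinarith [norm_nonneg z]
          · positivity
      _ = M ^ 2 * ‖S‖ := mul_one _
  rcases (norm_nonneg S).eq_or_lt with h0 | h0
  · rw [← h0, Real.sqrt_zero]; exact hM0
  · have : ‖S‖ ≤ M ^ 2 := le_of_mul_le_mul_right hSS h0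
    calc Real.sqrt ‖S‖ ≤ Real.sqrt (M ^ 2) := Real.sqrt_le_sqrt this
      _ = M := Real.sqrt_sq hM0

/-- `μ*ₙ(y₁,…,yₙ) = sup { ‖(Σᵢ |⟨yᵢ,z⟩|²)^{1/2}‖ : z ∈ X, ‖z‖ ≤ 1 }`. -/
noncomputable def mustar (n : ℕ) (y : Fin n → E) : ℝ :=
  sSup {r : ℝ | ∃ z : E, ‖z‖ ≤ 1 ∧
    r = Real.sqrt ‖∑ i, star (inner A (y i) z : A) * (inner A (y i) z : A)‖}

/-- If `x₁,…,xₙ` are mutually orthogonal, then `μ*ₙ(x₁,…,xₙ) = max₁≤i≤n ‖xᵢ‖`. -/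
theorem mustar_eq_max_of_orthogonal [CompleteSpace E] (n : ℕ) (x : Fin (n + 1) → E)
    (hx : ∀ i j, i ≠ j → (inner A (x i) (x j) : A) = 0) :
    mustar A (n + 1) x = ⨆ i, ‖x i‖ := by
  set M := ⨆ i, ‖x i‖ with hM
  have hbddr : BddAbove (Set.range fun i => ‖x i‖) := (Set.finite_range _).bddAbove
  have hMi : ∀ i, ‖x i‖ ≤ M := fun i => le_ciSup hbddr i
  have hM0 : 0 ≤ M := le_trans (norm_nonneg (x 0)) (hMi 0)
  have hub : ∀ r ∈ {r : ℝ | ∃ z : E, ‖z‖ ≤ 1 ∧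
      r = Real.sqrt ‖∑ i, star (inner A (x i) z : A) * (inner A (x i) z : A)‖}, r ≤ M := by
    rintro r ⟨z, hz, rfl⟩
    exact mustar_aux_upper A n x hx z hz
  have hbdd : BddAbove {r : ℝ | ∃ z : E, ‖z‖ ≤ 1 ∧
      r = Real.sqrt ‖∑ i, star (inner A (x i) z : A) * (inner A (x i) z : A)‖} := ⟨M, hub⟩
  refine le_antisymm (Real.sSup_le hub hM0) (ciSup_le fun i => ?_)
  by_cases hxi : x i = 0
  · rw [hxi, norm_zero]
    exact le_csSup hbdd ⟨0, by simp, by simp [CStarModuleRight.inner_zero_right]⟩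
  · have hpos : 0 < ‖x i‖ := norm_pos_iff.mpr hxi
    set c : ℂ := ((‖x i‖⁻¹ : ℝ) : ℂ) with hc
    set h : A := (inner A (x i) (x i) : A) with hh
    have hcn : ‖c‖ = ‖x i‖⁻¹ := by
      rw [hc, Complex.norm_real, Real.norm_of_nonneg (inv_nonneg.mpr (norm_nonneg _))]
    have hhn : ‖h‖ = ‖x i‖ ^ 2 := (CStarModuleRight.norm_sq_eq (A := A)).symm
    refine le_csSup hbdd ⟨c • x i, ?_, ?_⟩
    · rw [CStarModuleRight.norm_eq_sqrt_norm_inner_self (A := A),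
        CStarModuleRight.inner_smul_left_complex, CStarModuleRight.inner_smul_right_complex,
        smul_smul, norm_smul, CStarRing.norm_star_mul_self, hcn, hhn]
      have : ‖x i‖⁻¹ * ‖x i‖⁻¹ * ‖x i‖ ^ 2 = 1 := by
        rw [sq]
        field_simp
      rw [this, Real.sqrt_one]
    · have hsum : (∑ j, star (inner A (x j) (c • x i) : A) * (inner A (x j) (c • x i) : A))
          = star (c • h) * (c • h) := by
        rw [Finset.sum_eq_single i]
        · rw [CStarModuleRight.inner_smul_right_complex, hh]
        · intro j _ hj
          rw [CStarModuleRight.inner_smul_right_complex, hx j i hj, smul_zero, star_zero, zero_mul]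
        · simp
      rw [hsum, CStarRing.norm_star_mul_self, Real.sqrt_mul_self (norm_nonneg _),
        norm_smul, hcn, hhn, sq]
      field_simp
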